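/- arXiv:2603.08087 — 3 statements merged into one kernel-verified Lean document; each statement's English description precedes it below -/
import Mathlib

section
/- Suppose there exist x_P ∈ X attaining v(P) and x_ν ∈ X attaining v(ν) (both optimal values finite), that Q(x_P,·) and Q(x_ν,·) are integrable with respect to both P and ν, and that there exist a measurable cost c : Ξ × Ξ → [0,∞] and a constant β > 0 such that R(ξ,ξ') ≤ β·c(ξ,ξ') for all ξ, ξ' ∈ Ξ. Then |v(P) − v(ν)| ≤ β·max{T_c(P,ν), T_c(ν,P)}, the inequality being interpreted in the extended reals. -/
/-!
Evaluate each problem at the other's minimiser: `v(P) - v(ν) ≤ E_P Q(x_ν,·) - E_ν Q(x_ν,·)`.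
For any coupling `π` of `P` and `ν` the right side is `∫ (Q(x_ν,ξ) - Q(x_ν,ξ')) dπ`, and the
integrand is at most the regret `R(ξ,ξ') ≤ β c(ξ,ξ')`; taking the infimum over `π` gives
`β T_c(P,ν)`. Exchanging the roles of `P` and `ν` bounds `v(ν) - v(P)` by `β T_c(ν,P)`.
-/

open MeasureTheory ENNReal

/-- The set of couplings of two probability measures on `Ξ`. -/
def Couplings {Ξ : Type*} [MeasurableSpace Ξ] (μ ν : Measure Ξ) : Set (Measure (Ξ × Ξ)) :=
  {π | IsProbabilityMeasure π ∧ π.map Prod.fst = μ ∧ π.map Prod.snd = ν}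

/-- Optimal transport cost `T_c(μ,ν) = inf over couplings of ∫ c dπ`, in `[0,∞]`. -/
noncomputable def transportCost {Ξ : Type*} [MeasurableSpace Ξ] (c : Ξ → Ξ → ℝ≥0∞)
    (μ ν : Measure Ξ) : ℝ≥0∞ :=
  ⨅ π ∈ Couplings μ ν, ∫⁻ p, c p.1 p.2 ∂π

theorem MeasureTheory.ofReal_integral_le_lintegral_ofReal {α : Type*} [MeasurableSpace α]
    {μ : Measure α} {f : α → ℝ} (hf : Integrable f μ) :
    ENNReal.ofReal (∫ x, f x ∂μ) ≤ ∫⁻ x, ENNReal.ofReal (f x) ∂μ :=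
  calc ENNReal.ofReal (∫ x, f x ∂μ)
      ≤ ENNReal.ofReal (∫ x, max (f x) 0 ∂μ) :=
        ENNReal.ofReal_le_ofReal (integral_mono hf hf.pos_part fun x => le_max_left _ _)
    _ = ∫⁻ x, ENNReal.ofReal (max (f x) 0) ∂μ :=
        ofReal_integral_eq_lintegral_ofReal hf.pos_part (ae_of_all _ fun x => le_max_right _ _)
    _ = ∫⁻ x, ENNReal.ofReal (f x) ∂μ := by
        simp only [ENNReal.ofReal_max, ENNReal.ofReal_zero, max_zero]

theorem EReal.coe_ennreal_ofReal_mul {β : ℝ} (hβ : 0 ≤ β) (a : ℝ≥0∞) :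
    ((ENNReal.ofReal β * a : ℝ≥0∞) : EReal) = (β : EReal) * (a : EReal) := by
  rw [EReal.coe_ennreal_mul, EReal.coe_ennreal_ofReal, max_eq_left hβ]

theorem ofReal_le_ofReal_mul_of_coe_le_mul {r β : ℝ} (hβ : 0 ≤ β) {a : ℝ≥0∞}
    (h : (r : EReal) ≤ β * a) : ENNReal.ofReal r ≤ ENNReal.ofReal β * a := by
  rw [← EReal.coe_ennreal_le_coe_ennreal_iff, EReal.coe_ennreal_ofReal_mul hβ,
    EReal.coe_ennreal_ofReal]
  exact max_le h (EReal.coe_ennreal_ofReal_mul hβ a ▸ EReal.coe_ennreal_nonneg _)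

section Couplings

variable {Ξ : Type*} [MeasurableSpace Ξ] {μ₁ μ₂ : Measure Ξ} {π : Measure (Ξ × Ξ)} {f : Ξ → ℝ}

theorem integrable_comp_fst_of_mem_couplings (hπ : π ∈ Couplings μ₁ μ₂) (hf : Integrable f μ₁) :
    Integrable (fun p : Ξ × Ξ => f p.1) π := by
  rw [← hπ.2.1] at hf
  exact (integrable_map_measure hf.1 measurable_fst.aemeasurable).mp hf

theorem integrable_comp_snd_of_mem_couplings (hπ : π ∈ Couplings μ₁ μ₂) (hf : Integrable f μ₂) :
    Integrable (fun p : Ξ × Ξ => f p.2) π := by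
  rw [← hπ.2.2] at hf
  exact (integrable_map_measure hf.1 measurable_snd.aemeasurable).mp hf

theorem integral_sub_of_mem_couplings (hπ : π ∈ Couplings μ₁ μ₂) (h₁ : Integrable f μ₁)
    (h₂ : Integrable f μ₂) :
    ∫ p, (f p.1 - f p.2) ∂π = ∫ ξ, f ξ ∂μ₁ - ∫ ξ, f ξ ∂μ₂ := by
  rw [integral_sub (integrable_comp_fst_of_mem_couplings hπ h₁)
    (integrable_comp_snd_of_mem_couplings hπ h₂)]
  obtain ⟨-, rfl, rfl⟩ := hπ
  rw [integral_map measurable_fst.aemeasurable h₁.1, integral_map measurable_snd.aemeasurable h₂.1]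

theorem ofReal_integral_sub_le_mul_lintegral_of_mem_couplings {c : Ξ → Ξ → ℝ≥0∞} {b : ℝ≥0∞}
    (hb : b ≠ ∞) (hdom : ∀ ξ ξ', ENNReal.ofReal (f ξ - f ξ') ≤ b * c ξ ξ')
    (hπ : π ∈ Couplings μ₁ μ₂) (h₁ : Integrable f μ₁) (h₂ : Integrable f μ₂) :
    ENNReal.ofReal (∫ ξ, f ξ ∂μ₁ - ∫ ξ, f ξ ∂μ₂) ≤ b * ∫⁻ p, c p.1 p.2 ∂π :=
  calc ENNReal.ofReal (∫ ξ, f ξ ∂μ₁ - ∫ ξ, f ξ ∂μ₂)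
      = ENNReal.ofReal (∫ p, (f p.1 - f p.2) ∂π) := by
        rw [integral_sub_of_mem_couplings hπ h₁ h₂]
    _ ≤ ∫⁻ p, ENNReal.ofReal (f p.1 - f p.2) ∂π :=
        ofReal_integral_le_lintegral_ofReal ((integrable_comp_fst_of_mem_couplings hπ h₁).sub
          (integrable_comp_snd_of_mem_couplings hπ h₂))
    _ ≤ ∫⁻ p, b * c p.1 p.2 ∂π := lintegral_mono fun p => hdom p.1 p.2
    _ = b * ∫⁻ p, c p.1 p.2 ∂π := lintegral_const_mul' b _ hb

theorem ofReal_integral_sub_le_mul_transportCost {c : Ξ → Ξ → ℝ≥0∞} {b : ℝ≥0∞}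
    (hb₀ : b ≠ 0) (hb : b ≠ ∞) (hdom : ∀ ξ ξ', ENNReal.ofReal (f ξ - f ξ') ≤ b * c ξ ξ')
    (h₁ : Integrable f μ₁) (h₂ : Integrable f μ₂) :
    ENNReal.ofReal (∫ ξ, f ξ ∂μ₁ - ∫ ξ, f ξ ∂μ₂) ≤ b * transportCost c μ₁ μ₂ := by
  rw [transportCost, iInf_subtype', ENNReal.mul_iInf_of_ne hb₀ hb]
  exact le_iInf fun π =>
    ofReal_integral_sub_le_mul_lintegral_of_mem_couplings hb hdom π.2 h₁ h₂

end Couplings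

theorem stmt1_general {Ξ X : Type*} [MeasurableSpace Ξ]
    (g : X → ℝ) (Q : X → Ξ → ℝ)
    (P ν : Measure Ξ)
    (c : Ξ → Ξ → ℝ≥0∞)
    (β : ℝ) (hβ : 0 < β)
    -- regret domination: `R(ξ,ξ') = sup_x (Q(x,ξ) − Q(x,ξ')) ≤ β·c(ξ,ξ')`
    (hdom : ∀ ξ ξ' : Ξ,
      (⨆ x : X, ((Q x ξ - Q x ξ' : ℝ) : EReal)) ≤ (β : EReal) * ((c ξ ξ' : ℝ≥0∞) : EReal))
    -- `x_P` attains `v(P)` and `x_ν` attains `v(ν)`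
    (vP vν : ℝ) (xP xν : X)
    (hattainP : g xP + ∫ ξ, Q xP ξ ∂P = vP)
    (hminP : ∀ x : X, vP ≤ g x + ∫ ξ, Q x ξ ∂P)
    (hattainν : g xν + ∫ ξ, Q xν ξ ∂ν = vν)
    (hminν : ∀ x : X, vν ≤ g x + ∫ ξ, Q x ξ ∂ν)
    -- integrability of `Q(x_P,·)` and `Q(x_ν,·)` w.r.t. both measures
    (hintPP : Integrable (Q xP) P) (hintPν : Integrable (Q xP) ν)
    (hintνP : Integrable (Q xν) P) (hintνν : Integrable (Q xν) ν) :
    ((|vP - vν| : ℝ) : EReal)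
      ≤ (β : EReal) * ((max (transportCost c P ν) (transportCost c ν P) : ℝ≥0∞) : EReal) := by
  have hβ₀ : ENNReal.ofReal β ≠ 0 := (ENNReal.ofReal_pos.mpr hβ).ne'
  have hregret : ∀ x ξ ξ', ENNReal.ofReal (Q x ξ - Q x ξ') ≤ ENNReal.ofReal β * c ξ ξ' :=
    fun x ξ ξ' => ofReal_le_ofReal_mul_of_coe_le_mul hβ.le
      ((le_iSup (fun x => ((Q x ξ - Q x ξ' : ℝ) : EReal)) x).trans (hdom ξ ξ'))
  have hPν : ENNReal.ofReal (vP - vν) ≤ ENNReal.ofReal β * transportCost c P ν :=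
    (ENNReal.ofReal_le_ofReal (by linarith [hminP xν])).trans
      (ofReal_integral_sub_le_mul_transportCost hβ₀ ofReal_ne_top (hregret xν) hintνP hintνν)
  have hνP : ENNReal.ofReal (vν - vP) ≤ ENNReal.ofReal β * transportCost c ν P :=
    (ENNReal.ofReal_le_ofReal (by linarith [hminν xP])).trans
      (ofReal_integral_sub_le_mul_transportCost hβ₀ ofReal_ne_top (hregret xP) hintPν hintPP)
  have habs : ENNReal.ofReal |vP - vν|
      ≤ ENNReal.ofReal β * max (transportCost c P ν) (transportCost c ν P) := by
    rw [abs_eq_max_neg, ENNReal.ofReal_max, neg_sub]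
    exact max_le (hPν.trans (mul_le_mul_right (le_max_left _ _) _))
      (hνP.trans (mul_le_mul_right (le_max_right _ _) _))
  calc ((|vP - vν| : ℝ) : EReal) = ((ENNReal.ofReal |vP - vν| : ℝ≥0∞) : EReal) := by
        rw [EReal.coe_ennreal_ofReal, max_eq_left (abs_nonneg _)]
    _ ≤ _ := EReal.coe_ennreal_le_coe_ennreal_iff.mpr habs
    _ = _ := EReal.coe_ennreal_ofReal_mul hβ.le _

/-- If `x_P` attains `v(P)` and `x_ν` attains `v(ν)` (both finite),
`Q(x_P,·)` and `Q(x_ν,·)` are integrable w.r.t. both `P` and `ν`, and regret domination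
holds, then `|v(P) − v(ν)| ≤ β·max{T_c(P,ν), T_c(ν,P)}` in the extended reals. -/
theorem stmt1 {Ξ X : Type*} [MeasurableSpace Ξ] [Nonempty X]
    (g : X → ℝ) (Q : X → Ξ → ℝ) (hQmeas : ∀ x, Measurable (Q x))
    (P ν : Measure Ξ) [IsProbabilityMeasure P] [IsProbabilityMeasure ν]
    (c : Ξ → Ξ → ℝ≥0∞) (hcmeas : Measurable fun p : Ξ × Ξ => c p.1 p.2)
    (β : ℝ) (hβ : 0 < β)
    -- regret domination: `R(ξ,ξ') = sup_x (Q(x,ξ) − Q(x,ξ')) ≤ β·c(ξ,ξ')`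
    (hdom : ∀ ξ ξ' : Ξ,
      (⨆ x : X, ((Q x ξ - Q x ξ' : ℝ) : EReal)) ≤ (β : EReal) * ((c ξ ξ' : ℝ≥0∞) : EReal))
    -- `x_P` attains `v(P)` and `x_ν` attains `v(ν)`
    (vP vν : ℝ) (xP xν : X)
    (hattainP : g xP + ∫ ξ, Q xP ξ ∂P = vP)
    (hminP : ∀ x : X, vP ≤ g x + ∫ ξ, Q x ξ ∂P)
    (hattainν : g xν + ∫ ξ, Q xν ξ ∂ν = vν)
    (hminν : ∀ x : X, vν ≤ g x + ∫ ξ, Q x ξ ∂ν)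
    -- integrability of `Q(x_P,·)` and `Q(x_ν,·)` w.r.t. both measures
    (hintPP : Integrable (Q xP) P) (hintPν : Integrable (Q xP) ν)
    (hintνP : Integrable (Q xν) P) (hintνν : Integrable (Q xν) ν) :
    ((|vP - vν| : ℝ) : EReal)
      ≤ (β : EReal) * ((max (transportCost c P ν) (transportCost c ν P) : ℝ≥0∞) : EReal) :=
  stmt1_general g Q P ν c β hβ hdom vP vν xP xν hattainP hminP hattainν hminν hintPP hintPν hintνP
    hintνν
end

section
/- Assume: (i) for every x ∈ X and ξ ∈ Ξ the feasible set {z : Wz = h(ξ) − T(ξ)x, z ≥ 0} is nonempty; (ii) for every x ∈ X and ξ ∈ Ξ there exists π in the dual feasible set D = {π ∈ ℝ^m : Wᵀπ ≤ q} with πᵀ(h(ξ) − T(ξ)x) = Q(x,ξ); (iii) ‖π‖_∞ ≤ M_π for every π ∈ D; (iv) ‖x‖_∞ ≤ r for all x ∈ X. Then for all x ∈ X and all ξ, ξ' ∈ Ξ, the two-sided bound |Q(x,ξ) − Q(x,ξ')| ≤ M_π·(‖h(ξ) − h(ξ')‖₁ + r·‖T(ξ) − T(ξ')‖₁) holds.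 -/
open Matrix

/-- Value of the second-stage linear program with fixed recourse matrix `W`, cost `q`
and right-hand side `b`: `inf { qᵀz : Wz = b, z ≥ 0 }`. -/
noncomputable def lpValue {m k : ℕ} (W : Matrix (Fin m) (Fin k) ℝ) (q : Fin k → ℝ)
    (b : Fin m → ℝ) : ℝ :=
  sInf {r : ℝ | ∃ z : Fin k → ℝ, (∀ i, 0 ≤ z i) ∧ W.mulVec z = b ∧ r = q ⬝ᵥ z}

/-! The dual feasible set `D = {π : Wᵀπ ≤ q}` does not depend on the right-hand side, so by
weak duality an optimal dual `π` of `b` certifies `Q(b) - Q(b') ≤ π ⬝ᵥ (b - b')`, and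
symmetrically. Bounding `|π ⬝ᵥ v| ≤ M_π ‖v‖₁` and
`‖(h - T x) - (h' - T' x)‖₁ ≤ ‖h - h'‖₁ + r ‖T - T'‖₁` gives the estimate. -/

section LinearProgram

variable {m k : ℕ} (W : Matrix (Fin m) (Fin k) ℝ) (q : Fin k → ℝ)

theorem dotProduct_le_lpValue {b π : Fin m → ℝ} (hπ : ∀ j, Wᵀ.mulVec π j ≤ q j)
    {z₀ : Fin k → ℝ} (hz₀ : ∀ i, 0 ≤ z₀ i) (hWz₀ : W.mulVec z₀ = b) :
    π ⬝ᵥ b ≤ lpValue W q b := by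
  refine le_csInf ⟨q ⬝ᵥ z₀, z₀, hz₀, hWz₀, rfl⟩ ?_
  rintro _ ⟨z, hz, rfl, rfl⟩
  rw [dotProduct_mulVec, ← mulVec_transpose]
  exact Finset.sum_le_sum fun j _ => mul_le_mul_of_nonneg_right (hπ j) (hz j)

theorem abs_lpValue_sub_le {b b' : Fin m → ℝ} {C : ℝ}
    (hfeas : ∃ z, (∀ i, 0 ≤ z i) ∧ W.mulVec z = b)
    (hfeas' : ∃ z, (∀ i, 0 ≤ z i) ∧ W.mulVec z = b')
    (hdual : ∃ π, (∀ j, Wᵀ.mulVec π j ≤ q j) ∧ π ⬝ᵥ b = lpValue W q b)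
    (hdual' : ∃ π, (∀ j, Wᵀ.mulVec π j ≤ q j) ∧ π ⬝ᵥ b' = lpValue W q b')
    (hC : ∀ π, (∀ j, Wᵀ.mulVec π j ≤ q j) → |π ⬝ᵥ (b - b')| ≤ C) :
    |lpValue W q b - lpValue W q b'| ≤ C := by
  obtain ⟨z, hz, hWz⟩ := hfeas
  obtain ⟨z', hz', hWz'⟩ := hfeas'
  obtain ⟨π, hπ, hπb⟩ := hdual
  obtain ⟨π', hπ', hπ'b'⟩ := hdual'
  have hπb' := dotProduct_le_lpValue W q hπ hz' hWz'
  have hπ'b := dotProduct_le_lpValue W q hπ' hz hWz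
  have hCπ := (le_abs_self _).trans (hC π hπ)
  have hCπ' := (neg_le_abs _).trans (hC π' hπ')
  rw [dotProduct_sub] at hCπ hCπ'
  rw [abs_sub_le_iff]
  constructor <;> linarith

end LinearProgram

section L1Bounds

variable {ι κ : Type*} [Fintype ι] [Fintype κ]

theorem abs_dotProduct_le_mul_sum_abs {π v : ι → ℝ} {M : ℝ} (hπ : ∀ i, |π i| ≤ M) :
    |π ⬝ᵥ v| ≤ M * ∑ i, |v i| := by
  rw [Finset.mul_sum]
  refine (Finset.abs_sum_le_sum_abs _ _).trans (Finset.sum_le_sum fun i _ => ?_)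
  rw [abs_mul]
  exact mul_le_mul_of_nonneg_right (hπ i) (abs_nonneg _)

theorem sum_abs_mulVec_le (A : Matrix ι κ ℝ) {x : κ → ℝ} {r : ℝ} (hx : ∀ j, |x j| ≤ r) :
    ∑ i, |(A *ᵥ x) i| ≤ r * ∑ i, ∑ j, |A i j| := by
  simp_rw [Finset.mul_sum, mulVec, dotProduct]
  refine Finset.sum_le_sum fun i _ =>
    (Finset.abs_sum_le_sum_abs _ _).trans (Finset.sum_le_sum fun j _ => ?_)
  rw [abs_mul, mul_comm r]
  exact mul_le_mul_of_nonneg_left (hx j) (abs_nonneg _)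

theorem sum_abs_sub_mulVec_sub_le (h h' : ι → ℝ) (T T' : Matrix ι κ ℝ) {x : κ → ℝ} {r : ℝ}
    (hx : ∀ j, |x j| ≤ r) :
    ∑ i, |(h - T *ᵥ x - (h' - T' *ᵥ x)) i|
      ≤ ∑ i, |h i - h' i| + r * ∑ i, ∑ j, |T i j - T' i j| := by
  have hsplit : h - T *ᵥ x - (h' - T' *ᵥ x) = (h - h') - (T - T') *ᵥ x := by
    rw [sub_mulVec]; abel
  calc ∑ i, |(h - T *ᵥ x - (h' - T' *ᵥ x)) i|
      ≤ ∑ i, (|h i - h' i| + |((T - T') *ᵥ x) i|) := by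
        rw [hsplit]
        exact Finset.sum_le_sum fun i _ => abs_sub _ _
    _ ≤ ∑ i, |h i - h' i| + r * ∑ i, ∑ j, |T i j - T' i j| := by
        rw [Finset.sum_add_distrib]
        exact add_le_add_right (sum_abs_mulVec_le (T - T') hx) _

end L1Bounds

theorem stmt9_general {Ξ : Type*} {n m k : ℕ}
    (X : Set (Fin n → ℝ))
    (W : Matrix (Fin m) (Fin k) ℝ) (q : Fin k → ℝ)
    (h : Ξ → Fin m → ℝ) (T : Ξ → Matrix (Fin m) (Fin n) ℝ)
    (Q : (Fin n → ℝ) → Ξ → ℝ)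
    (hQ : ∀ x ξ, Q x ξ = lpValue W q (h ξ - (T ξ).mulVec x))
    -- (i) relatively complete recourse
    (hfeas : ∀ x ∈ X, ∀ ξ : Ξ, ∃ z : Fin k → ℝ,
      (∀ i, 0 ≤ z i) ∧ W.mulVec z = h ξ - (T ξ).mulVec x)
    -- (ii) strong duality attainment on the dual feasible set `D = {π : Wᵀπ ≤ q}`
    (hdual : ∀ x ∈ X, ∀ ξ : Ξ, ∃ π : Fin m → ℝ,
      (∀ j, Wᵀ.mulVec π j ≤ q j) ∧ π ⬝ᵥ (h ξ - (T ξ).mulVec x) = Q x ξ)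
    -- (iii) bounded duals
    (Mπ : ℝ) (hMπ : 0 < Mπ)
    (hbdd : ∀ π : Fin m → ℝ, (∀ j, Wᵀ.mulVec π j ≤ q j) → ∀ i, |π i| ≤ Mπ)
    -- (iv) bounded first stage
    (r : ℝ) (hr : ∀ x ∈ X, ∀ i, |x i| ≤ r) :
    ∀ x ∈ X, ∀ ξ ξ' : Ξ,
      |Q x ξ - Q x ξ'|
        ≤ Mπ * ((∑ i, |h ξ i - h ξ' i|) + r * ∑ i, ∑ j, |T ξ i j - T ξ' i j|) := by
  intro x hx ξ ξ'
  have hdual_lp : ∀ ζ, ∃ π : Fin m → ℝ, (∀ j, Wᵀ.mulVec π j ≤ q j) ∧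
      π ⬝ᵥ (h ζ - (T ζ).mulVec x) = lpValue W q (h ζ - (T ζ).mulVec x) :=
    fun ζ => hQ x ζ ▸ hdual x hx ζ
  rw [hQ, hQ]
  refine abs_lpValue_sub_le W q (hfeas x hx ξ) (hfeas x hx ξ') (hdual_lp ξ) (hdual_lp ξ')
    fun π hπ => ?_
  exact (abs_dotProduct_le_mul_sum_abs (hbdd π hπ)).trans <|
    mul_le_mul_of_nonneg_left (sum_abs_sub_mulVec_sub_le _ _ _ _ (hr x hx)) hMπ.le

/-- Under relatively complete recourse, dual strong-duality attainment,
bounded dual feasible set and bounded first stage, the two-sided sensitivity bound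
`|Q(x,ξ) − Q(x,ξ')| ≤ M_π·(‖h(ξ) − h(ξ')‖₁ + r·‖T(ξ) − T(ξ')‖₁)` holds for all
`x ∈ X` and all `ξ, ξ' ∈ Ξ`. -/
theorem stmt9 {Ξ : Type*} {n m k : ℕ}
    (X : Set (Fin n → ℝ)) (hX : X.Nonempty)
    (W : Matrix (Fin m) (Fin k) ℝ) (q : Fin k → ℝ)
    (h : Ξ → Fin m → ℝ) (T : Ξ → Matrix (Fin m) (Fin n) ℝ)
    (Q : (Fin n → ℝ) → Ξ → ℝ)
    (hQ : ∀ x ξ, Q x ξ = lpValue W q (h ξ - (T ξ).mulVec x))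
    -- (i) relatively complete recourse
    (hfeas : ∀ x ∈ X, ∀ ξ : Ξ, ∃ z : Fin k → ℝ,
      (∀ i, 0 ≤ z i) ∧ W.mulVec z = h ξ - (T ξ).mulVec x)
    -- (ii) strong duality attainment on the dual feasible set `D = {π : Wᵀπ ≤ q}`
    (hdual : ∀ x ∈ X, ∀ ξ : Ξ, ∃ π : Fin m → ℝ,
      (∀ j, Wᵀ.mulVec π j ≤ q j) ∧ π ⬝ᵥ (h ξ - (T ξ).mulVec x) = Q x ξ)
    -- (iii) bounded duals
    (Mπ : ℝ) (hMπ : 0 < Mπ)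
    (hbdd : ∀ π : Fin m → ℝ, (∀ j, Wᵀ.mulVec π j ≤ q j) → ∀ i, |π i| ≤ Mπ)
    -- (iv) bounded first stage
    (r : ℝ) (hr : ∀ x ∈ X, ∀ i, |x i| ≤ r) :
    ∀ x ∈ X, ∀ ξ ξ' : Ξ,
      |Q x ξ - Q x ξ'|
        ≤ Mπ * ((∑ i, |h ξ i - h ξ' i|) + r * ∑ i, ∑ j, |T ξ i j - T ξ' i j|) :=
  stmt9_general X W q h T Q hQ hfeas hdual Mπ hMπ hbdd r hr
end

section
/- Let Ξ be a normed space with its Borel σ-algebra, X a nonempty set, g : X → ℝ, and Q : X × Ξ → ℝ with Q(x,·) measurable for each x ∈ X. Let P and ν be Borel probability measures on Ξ, and suppose: (i) there exist x_P, x_ν ∈ X attaining v(P) and v(ν) respectively (both finite), with Q(x_P,·) and Q(x_ν,·) integrable with respect to both P and ν; (ii) there is K > 0 such that |Q(x,ξ) − Q(x,ξ')| ≤ K·‖ξ − ξ'‖ for all x ∈ X and all ξ, ξ' ∈ Ξ. Then |v(P) − v(ν)| ≤ K·W₁(P,ν), the inequality being interpreted in the extended reals. -/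
open MeasureTheory ENNReal

/-- The `1`-Wasserstein distance on a normed space:
`W₁(μ,ν) = inf_π ∫ ‖ξ − ξ'‖ dπ`, in `[0,∞]`. -/
noncomputable def wasserstein1 {Ξ : Type*} [NormedAddCommGroup Ξ] [MeasurableSpace Ξ]
    (μ ν : Measure Ξ) : ℝ≥0∞ :=
  ⨅ π ∈ Couplings μ ν, ∫⁻ p, ENNReal.ofReal ‖p.1 - p.2‖ ∂π

/-! Fix the first-stage decision `x_ν` optimal for `ν`: it is feasible for `P`, so
`v(P) - v(ν) ≤ ∫ Q(x_ν,·) dP - ∫ Q(x_ν,·) dν`, and symmetrically with `x_P`. Integrating a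
`K`-Lipschitz function against the two marginals of any coupling `π` gives
`|∫ f dP - ∫ f dν| ≤ K ∫ ‖ξ - ξ'‖ dπ`, and taking the infimum over `π` yields `K·W₁(P,ν)`. -/

section Coupling

variable {Ξ : Type*} [MeasurableSpace Ξ] {μ ν : Measure Ξ}
  {π : Measure (Ξ × Ξ)} {f : Ξ → ℝ} {K : ℝ}

theorem integral_sub_integral_eq_integral_of_mem_couplings (hπ : π ∈ Couplings μ ν)
    (hμ : Integrable f μ) (hν : Integrable f ν) :
    ∫ ξ, f ξ ∂μ - ∫ ξ, f ξ ∂ν = ∫ p, (f p.1 - f p.2) ∂π := by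
  obtain ⟨-, hfst, hsnd⟩ := hπ
  subst hfst hsnd
  rw [integral_map measurable_fst.aemeasurable hμ.aestronglyMeasurable,
    integral_map measurable_snd.aemeasurable hν.aestronglyMeasurable]
  exact (integral_sub (hμ.comp_measurable measurable_fst) (hν.comp_measurable measurable_snd)).symm

theorem ofReal_abs_integral_sub_integral_le_of_mem_couplings [NormedAddCommGroup Ξ] (hK : 0 ≤ K)
    (hf : ∀ a b, |f a - f b| ≤ K * ‖a - b‖) (hπ : π ∈ Couplings μ ν)
    (hμ : Integrable f μ) (hν : Integrable f ν) :
    ENNReal.ofReal |∫ ξ, f ξ ∂μ - ∫ ξ, f ξ ∂ν| ≤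
      ENNReal.ofReal K * ∫⁻ p, ENNReal.ofReal ‖p.1 - p.2‖ ∂π := by
  rw [integral_sub_integral_eq_integral_of_mem_couplings hπ hμ hν, ← Real.enorm_eq_ofReal_abs]
  calc ‖∫ p, (f p.1 - f p.2) ∂π‖ₑ
      ≤ ∫⁻ p, ‖f p.1 - f p.2‖ₑ ∂π := enorm_integral_le_lintegral_enorm _
    _ ≤ ∫⁻ p, ENNReal.ofReal K * ENNReal.ofReal ‖p.1 - p.2‖ ∂π := by
        refine lintegral_mono fun p => ?_
        rw [Real.enorm_eq_ofReal_abs, ← ENNReal.ofReal_mul hK]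
        exact ENNReal.ofReal_le_ofReal (hf _ _)
    _ = ENNReal.ofReal K * ∫⁻ p, ENNReal.ofReal ‖p.1 - p.2‖ ∂π :=
        lintegral_const_mul' _ _ ofReal_ne_top

theorem ofReal_abs_integral_sub_integral_le_wasserstein1 [NormedAddCommGroup Ξ] (hK : 0 < K)
    (hf : ∀ a b, |f a - f b| ≤ K * ‖a - b‖) (hμ : Integrable f μ) (hν : Integrable f ν) :
    ENNReal.ofReal |∫ ξ, f ξ ∂μ - ∫ ξ, f ξ ∂ν| ≤ ENNReal.ofReal K * wasserstein1 μ ν := by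
  have hK₀ : ENNReal.ofReal K ≠ 0 := (ENNReal.ofReal_pos.mpr hK).ne'
  rw [wasserstein1, mul_iInf_of_ne hK₀ ofReal_ne_top]
  refine le_iInf fun π => ?_
  rw [mul_iInf_of_ne hK₀ ofReal_ne_top]
  exact le_iInf fun hπ =>
    ofReal_abs_integral_sub_integral_le_of_mem_couplings hK.le hf hπ hμ hν

end Coupling

theorem EReal.coe_le_coe_mul_coe_ennreal {a K : ℝ} {w : ℝ≥0∞} (ha : 0 ≤ a) (hK : 0 ≤ K)
    (h : ENNReal.ofReal a ≤ ENNReal.ofReal K * w) : (a : EReal) ≤ (K : EReal) * (w : EReal) := by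
  have := EReal.coe_ennreal_le_coe_ennreal_iff.mpr h
  rwa [EReal.coe_ennreal_mul, EReal.coe_ennreal_ofReal, EReal.coe_ennreal_ofReal,
    max_eq_left ha, max_eq_left hK] at this

theorem stmt17_general {Ξ X : Type*} [NormedAddCommGroup Ξ] [MeasurableSpace Ξ]
    (g : X → ℝ) (Q : X → Ξ → ℝ)
    (P ν : Measure Ξ)
    -- (i) attainment of both optimal values, with integrability
    (vP vν : ℝ) (xP xν : X)
    (hattainP : g xP + ∫ ξ, Q xP ξ ∂P = vP)
    (hminP : ∀ x : X, vP ≤ g x + ∫ ξ, Q x ξ ∂P)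
    (hattainν : g xν + ∫ ξ, Q xν ξ ∂ν = vν)
    (hminν : ∀ x : X, vν ≤ g x + ∫ ξ, Q x ξ ∂ν)
    (hintPP : Integrable (Q xP) P) (hintPν : Integrable (Q xP) ν)
    (hintνP : Integrable (Q xν) P) (hintνν : Integrable (Q xν) ν)
    -- (ii) uniform Lipschitz continuity in the scenario
    (K : ℝ) (hK : 0 < K)
    (hlip : ∀ x : X, ∀ ξ ξ' : Ξ, |Q x ξ - Q x ξ'| ≤ K * ‖ξ - ξ'‖) :
    ((|vP - vν| : ℝ) : EReal) ≤ (K : EReal) * ((wasserstein1 P ν : ℝ≥0∞) : EReal) := by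
  have hPν : vP - vν ≤ ∫ ξ, Q xν ξ ∂P - ∫ ξ, Q xν ξ ∂ν := by linarith [hminP xν]
  have hνP : vν - vP ≤ ∫ ξ, Q xP ξ ∂ν - ∫ ξ, Q xP ξ ∂P := by linarith [hminν xP]
  refine EReal.coe_le_coe_mul_coe_ennreal (abs_nonneg _) hK.le ?_
  rcases abs_choice (vP - vν) with h | h
  · calc ENNReal.ofReal |vP - vν|
        ≤ ENNReal.ofReal |∫ ξ, Q xν ξ ∂P - ∫ ξ, Q xν ξ ∂ν| := by
          rw [h]
          exact ENNReal.ofReal_le_ofReal (hPν.trans (le_abs_self _))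
      _ ≤ _ := ofReal_abs_integral_sub_integral_le_wasserstein1 hK (hlip xν) hintνP hintνν
  · calc ENNReal.ofReal |vP - vν|
        ≤ ENNReal.ofReal |∫ ξ, Q xP ξ ∂P - ∫ ξ, Q xP ξ ∂ν| := by
          rw [h, neg_sub, abs_sub_comm]
          exact ENNReal.ofReal_le_ofReal (hνP.trans (le_abs_self _))
      _ ≤ _ := ofReal_abs_integral_sub_integral_le_wasserstein1 hK (hlip xP) hintPP hintPν

/-- If `x_P` and `x_ν` attain `v(P)` and `v(ν)` (both finite) with the
corresponding recourse functions integrable, and `Q` is uniformly `K`-Lipschitz in the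
scenario (`|Q(x,ξ) − Q(x,ξ')| ≤ K·‖ξ − ξ'‖`), then `|v(P) − v(ν)| ≤ K·W₁(P,ν)` in the
extended reals. -/
theorem stmt17 {Ξ X : Type*} [NormedAddCommGroup Ξ] [MeasurableSpace Ξ] [BorelSpace Ξ]
    [Nonempty X]
    (g : X → ℝ) (Q : X → Ξ → ℝ) (hQmeas : ∀ x, Measurable (Q x))
    (P ν : Measure Ξ) [IsProbabilityMeasure P] [IsProbabilityMeasure ν]
    -- (i) attainment of both optimal values, with integrability
    (vP vν : ℝ) (xP xν : X)
    (hattainP : g xP + ∫ ξ, Q xP ξ ∂P = vP)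
    (hminP : ∀ x : X, vP ≤ g x + ∫ ξ, Q x ξ ∂P)
    (hattainν : g xν + ∫ ξ, Q xν ξ ∂ν = vν)
    (hminν : ∀ x : X, vν ≤ g x + ∫ ξ, Q x ξ ∂ν)
    (hintPP : Integrable (Q xP) P) (hintPν : Integrable (Q xP) ν)
    (hintνP : Integrable (Q xν) P) (hintνν : Integrable (Q xν) ν)
    -- (ii) uniform Lipschitz continuity in the scenario
    (K : ℝ) (hK : 0 < K)
    (hlip : ∀ x : X, ∀ ξ ξ' : Ξ, |Q x ξ - Q x ξ'| ≤ K * ‖ξ - ξ'‖) :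
    ((|vP - vν| : ℝ) : EReal) ≤ (K : EReal) * ((wasserstein1 P ν : ℝ≥0∞) : EReal) :=
  stmt17_general g Q P ν vP vν xP xν hattainP hminP hattainν hminν hintPP hintPν hintνP hintνν K hK
    hlip
end
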